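/- arXiv:math/0411387 — 3 statements merged into one kernel-verified Lean document; each statement's English description precedes it below -/
import Mathlib

section
/- Let n ≥ 1 and let a be a parking function of length n. Then a is prime (i.e. its only breakpoint is n) if and only if there do not exist parking functions u of length k ≥ 1 and v of length l ≥ 1 with k + l = n such that a occurs in the shifted shuffle u ⋒ v. -/
open List

/-- `sortW w` is the nondecreasing rearrangement `w↑` of the word `w`. -/
def sortW (w : List ℕ) : List ℕ := w.mergeSort (fun a b => decide (a ≤ b))

/-- `a` is a parking function: a word over the positive integers whose
nondecreasing rearrangement `a↑ = a'₁ ⋯ a'ₙ` satisfies `a'ᵢ ≤ i` for all `i`. -/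
def IsPF (a : List ℕ) : Prop :=
  (∀ x ∈ a, 1 ≤ x) ∧ ∀ i, i < a.length → (sortW a).getD i 0 ≤ i + 1

/-- `dW w = min { i ≥ 1 : #{j : wⱼ ≤ i} < i }`. -/
noncomputable def dW (w : List ℕ) : ℕ := sInf {i | 1 ≤ i ∧ w.countP (fun x => decide (x ≤ i)) < i}

/-- Decrement by one every letter strictly greater than `d`. -/
def decAbove (d : ℕ) (w : List ℕ) : List ℕ := w.map (fun x => if d < x then x - 1 else x)

lemma mem_dW_set (w : List ℕ) :
    (w.length + 1) ∈ {i | 1 ≤ i ∧ w.countP (fun x => decide (x ≤ i)) < i} := by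
  refine ⟨by omega, ?_⟩
  have : w.countP (fun x => decide (x ≤ w.length + 1)) ≤ w.length := List.countP_le_length
  omega

lemma decAbove_sum_lt {w : List ℕ} (h : dW w ≠ w.length + 1) :
    (decAbove (dW w) w).sum < w.sum := by
  have hmem : 1 ≤ dW w ∧ w.countP (fun x => decide (x ≤ dW w)) < dW w := Nat.sInf_mem (⟨_, mem_dW_set w⟩ : Set.Nonempty _)
  have hle : dW w ≤ w.length + 1 := Nat.sInf_le (mem_dW_set w)
  obtain ⟨h1, h2⟩ := hmem
  have hlen : dW w ≤ w.length := by omega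
  -- there is a letter strictly greater than `dW w`
  have hx : ∃ x ∈ w, ¬ (x ≤ dW w) := by
    by_contra hc
    push_neg at hc
    have : w.countP (fun x => decide (x ≤ dW w)) = w.length := by
      rw [List.countP_eq_length]
      intro a ha
      simpa using hc a ha
    omega
  obtain ⟨x, hxw, hxd⟩ := hx
  have := List.sum_lt_sum (l := w) (f := fun y => if dW w < y then y - 1 else y) (g := id)
    (fun i _ => by dsimp; split <;> omega)
    ⟨x, hxw, by dsimp; rw [if_pos (by omega)]; omega⟩
  simpa [decAbove] using this

/-- The parkization `Park(w)` of a word `w` over the positive integers. -/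
noncomputable def park (w : List ℕ) : List ℕ :=
  if h : dW w = w.length + 1 then w
  else
    have : (decAbove (dW w) w).sum < w.sum := decAbove_sum_lt h
    park (decAbove (dW w) w)
termination_by w.sum

/-- The standardization `Std(w)`: its `i`-th letter is `#{j : wⱼ ≤ wᵢ}`. -/
def stdW (w : List ℕ) : List ℕ := w.map (fun x => w.countP (fun y => decide (y ≤ x)))

/-- `v[k]`: shift every letter of `v` by `k`. -/
def shiftW (k : ℕ) (v : List ℕ) : List ℕ := v.map (· + k)

/-- Shifted concatenation `u • v = u · v[k]`, `k = |u|`. -/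
def sconc (u v : List ℕ) : List ℕ := u ++ shiftW u.length v

/-- The multiset of all shuffles of two words, counted with multiplicity. -/
def shuffles : List ℕ → List ℕ → Multiset (List ℕ)
  | [], v => {v}
  | x :: u, [] => {x :: u}
  | x :: u, y :: v =>
      (shuffles u (y :: v)).map (fun w => x :: w) + (shuffles (x :: u) v).map (fun w => y :: w)
termination_by u v => u.length + v.length

/-- Shifted shuffle `u ⋒ v`, a multiset of words. -/
def sshuffle (u v : List ℕ) : Multiset (List ℕ) := shuffles u (shiftW u.length v)

/-- Iterated shifted shuffle `u₁ ⋒ u₂ ⋒ ⋯ ⋒ u_r`. -/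
def itersShuffle : List (List ℕ) → Multiset (List ℕ)
  | [] => {[]}
  | u :: rest => (itersShuffle rest).bind (fun v => sshuffle u v)

/-- Lexicographic pair-encoding `a ⊛ b` of two words of length `n` with letters in `[n]`:
the `i`-th letter is `(aᵢ - 1)·n + bᵢ`. -/
def pairEnc (n : ℕ) (a b : List ℕ) : List ℕ := List.zipWith (fun x y => (x - 1) * n + y) a b

/-- The internal product `a * b := Park(a ⊛ b)` of two parking functions of the same length. -/
noncomputable def iprod (a b : List ℕ) : List ℕ := park (pairEnc a.length a b)

/-- The word `1^m` of length `m` with all letters equal to `1`. -/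
def onesW (m : ℕ) : List ℕ := List.replicate m 1

/-- The multiset (without repetition) of all words `a` with `a↑ = π`. -/
def classM (π : List ℕ) : Multiset (List ℕ) :=
  (↑(π.permutations.dedup) : Multiset (List ℕ)).filter (fun a => sortW a = π)

open Classical in
/-- The finite set of all parking functions of length `n`. -/
noncomputable def PFfin (n : ℕ) : Finset (List ℕ) :=
  ((Finset.univ : Finset (Fin n → Fin n)).image
    (fun f => List.ofFn (fun i => (f i : ℕ) + 1))).filter IsPF

/-- Split a word into consecutive factors of the given lengths. -/
def splitFactors : List ℕ → List ℕ → List (List ℕ)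
  | [], _ => []
  | k :: ks, e => e.take k :: splitFactors ks (e.drop k)

/-- Iterated shifted concatenation. -/
def sconcAll : List (List ℕ) → List ℕ
  | [] => []
  | u :: rest => sconc u (sconcAll rest)

/-- Multiset of tuples `(a₁, …, a_r)` (as lists) with `aᵢ↑ = πᵢ`. -/
def tuplesM : List (List ℕ) → Multiset (List (List ℕ))
  | [] => {[]}
  | p :: ps => (classM p).bind (fun a => (tuplesM ps).map (fun A => a :: A))

/-- `π'` is a successor of `π`: the evaluation of `π'` is obtained from that of `π`
by merging two consecutive (modulo zeros) nonzero entries onto the left one. -/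
def IsSuccEv (π π' : List ℕ) : Prop :=
  ∃ i j : ℕ, 1 ≤ i ∧ i < j ∧ π.count i ≠ 0 ∧ π.count j ≠ 0 ∧
    (∀ k, i < k → k < j → π.count k = 0) ∧
    (∀ m, π'.count m = if m = i then π.count i + π.count j else if m = j then 0 else π.count m)

/-- The partial order `π ⪯ π'`: reflexive–transitive closure of the successor relation. -/
def succeq (π π' : List ℕ) : Prop := Relation.ReflTransGen IsSuccEv π π'

/-!
A breakpoint `b` of `a` splits `a` into its letters `≤ b` and its letters `> b`: the first form a
parking function `u` of length `b`, the second, lowered by `b`, a parking function `v`, and `a`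
is a shuffle of `u` and `v[b]`. Conversely, in a shuffle of `u ∈ PF_k` with `v[k]` exactly the
`k` letters of `u` are `≤ k`, so `k` is a breakpoint. Both directions use the parking condition
in its counting form: `a ∈ PF_n` iff `#{j : aⱼ ≤ i + 1} > i` for all `i < n`.
-/

lemma getElem_le_iff_lt_countP_of_pairwise {α : Type*} [LinearOrder α] {s : List α}
    (hs : s.Pairwise (· ≤ ·)) {i : ℕ} (hi : i < s.length) (m : α) :
    s[i] ≤ m ↔ i < s.countP (fun x => decide (x ≤ m)) := by
  have hdrop := drop_eq_getElem_cons hi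
  have hle_take : ∀ x ∈ s.take i, x ≤ s[i] := by
    have h := hs
    rw [← take_append_drop i s, pairwise_append] at h
    exact fun x hx => h.2.2 x hx s[i] (hdrop ▸ mem_cons_self)
  have hge_drop : ∀ y ∈ s.drop i, s[i] ≤ y := by
    have h := hs.drop (i := i)
    rw [hdrop, pairwise_cons] at h
    rw [hdrop]
    rintro y (_ | ⟨_, hy⟩)
    exacts [le_rfl, h.1 y hy]
  have hsplit : s.countP (fun x => decide (x ≤ m)) =
      (s.take i).countP (fun x => decide (x ≤ m)) +
        (s.drop i).countP (fun x => decide (x ≤ m)) := by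
    rw [← countP_append, take_append_drop]
  have hlen_take : (s.take i).length = i := length_take_of_le hi.le
  constructor
  · intro hm
    have htake : (s.take i).countP (fun x => decide (x ≤ m)) = i := by
      rw [countP_eq_length.2 fun x hx => by simpa using (hle_take x hx).trans hm, hlen_take]
    have hdrop_pos : 0 < (s.drop i).countP (fun x => decide (x ≤ m)) :=
      countP_pos_iff.2 ⟨s[i], hdrop ▸ mem_cons_self, by simpa using hm⟩
    omega
  · intro hlt
    by_contra! hm
    have hdrop_zero : (s.drop i).countP (fun x => decide (x ≤ m)) = 0 :=
      countP_eq_zero.2 fun y hy => by simpa using hm.trans_le (hge_drop y hy)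
    have : (s.take i).countP (fun x => decide (x ≤ m)) ≤ i :=
      countP_le_length.trans_eq hlen_take
    omega

theorem isPF_iff_countP {a : List ℕ} :
    IsPF a ↔
      (∀ x ∈ a, 1 ≤ x) ∧ ∀ i < a.length, i < a.countP (fun x => decide (x ≤ i + 1)) := by
  have hperm := mergeSort_perm a (fun x y => decide (x ≤ y))
  have hsorted : (sortW a).Pairwise (· ≤ ·) := pairwise_mergeSort' _ a
  refine and_congr_right fun _ => forall₂_congr fun i hi => ?_
  have hi' : i < (sortW a).length := by rwa [sortW, hperm.length_eq]
  rw [getD_eq_getElem _ _ hi', getElem_le_iff_lt_countP_of_pairwise hsorted hi', sortW,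
    hperm.countP_eq]

theorem IsPF.countP_le_length_eq_length {a : List ℕ} (ha : IsPF a) :
    a.countP (fun x => decide (x ≤ a.length)) = a.length := by
  refine le_antisymm countP_le_length ?_
  rcases Nat.eq_zero_or_pos a.length with h | hpos
  · omega
  · have h := (isPF_iff_countP.1 ha).2 (a.length - 1) (by omega)
    rw [Nat.sub_add_cancel hpos] at h
    omega

lemma shuffles_nil_right (u : List ℕ) : shuffles u [] = {u} := by
  cases u <;> simp [shuffles]

lemma cons_mem_shuffles_cons_left {w u v : List ℕ} (x : ℕ) (h : w ∈ shuffles u v) :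
    x :: w ∈ shuffles (x :: u) v := by
  cases v with
  | nil =>
    rw [shuffles_nil_right, Multiset.mem_singleton] at h
    rw [shuffles_nil_right, h, Multiset.mem_singleton]
  | cons y v =>
    rw [shuffles]
    exact Multiset.mem_add.2 (Or.inl (Multiset.mem_map_of_mem _ h))

lemma cons_mem_shuffles_cons_right {w u v : List ℕ} (y : ℕ) (h : w ∈ shuffles u v) :
    y :: w ∈ shuffles u (y :: v) := by
  cases u with
  | nil =>
    rw [shuffles, Multiset.mem_singleton] at h
    rw [shuffles, h, Multiset.mem_singleton]
  | cons x u =>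
    rw [shuffles]
    exact Multiset.mem_add.2 (Or.inr (Multiset.mem_map_of_mem _ h))

theorem mem_shuffles_filter_filter_not (p : ℕ → Bool) :
    ∀ a : List ℕ, a ∈ shuffles (a.filter p) (a.filter (!p ·))
  | [] => by simp [shuffles]
  | x :: t => by
    by_cases hx : p x
    · simpa [filter_cons, hx] using
        cons_mem_shuffles_cons_left x (mem_shuffles_filter_filter_not p t)
    · simpa [filter_cons, hx] using
        cons_mem_shuffles_cons_right x (mem_shuffles_filter_filter_not p t)

theorem perm_append_of_mem_shuffles {u v w : List ℕ} (h : w ∈ shuffles u v) :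
    w.Perm (u ++ v) := by
  induction u, v using shuffles.induct generalizing w with
  | case1 v => simp_all [shuffles]
  | case2 x u => simp_all [shuffles]
  | case3 x u y v ih_left ih_right =>
    rw [shuffles] at h
    rcases Multiset.mem_add.1 h with h | h
    · obtain ⟨w', hw', rfl⟩ := Multiset.mem_map.1 h
      exact (ih_left hw').cons x
    · obtain ⟨w', hw', rfl⟩ := Multiset.mem_map.1 h
      exact ((ih_right hw').cons y).trans perm_middle.symm

theorem countP_le_length_eq_of_mem_sshuffle {u v a : List ℕ} (hu : IsPF u)
    (hv : ∀ x ∈ v, 1 ≤ x) (ha : a ∈ sshuffle u v) :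
    a.countP (fun x => decide (x ≤ u.length)) = u.length := by
  have hshift : (shiftW u.length v).countP (fun x => decide (x ≤ u.length)) = 0 := by
    simp only [shiftW, countP_eq_zero, mem_map]
    rintro _ ⟨y, hy, rfl⟩
    have := hv y hy
    simp only [decide_eq_true_eq]
    omega
  rw [(perm_append_of_mem_shuffles ha).countP_eq, countP_append, hu.countP_le_length_eq_length,
    hshift, add_zero]

def lowerPart (b : ℕ) (a : List ℕ) : List ℕ := a.filter fun x => decide (x ≤ b)

def upperPart (b : ℕ) (a : List ℕ) : List ℕ :=
  (a.filter fun x => !decide (x ≤ b)).map (· - b)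

section Breakpoint

variable {a : List ℕ} {b : ℕ}

theorem length_lowerPart : (lowerPart b a).length = a.countP (fun x => decide (x ≤ b)) :=
  countP_eq_length_filter.symm

theorem length_upperPart :
    (upperPart b a).length = a.length - a.countP (fun x => decide (x ≤ b)) := by
  have := length_eq_length_filter_add (l := a) (fun x => decide (x ≤ b))
  simp only [upperPart, length_map, ← countP_eq_length_filter] at this ⊢
  omega

theorem countP_lowerPart {m : ℕ} (hm : m ≤ b) :
    (lowerPart b a).countP (fun x => decide (x ≤ m)) = a.countP (fun x => decide (x ≤ m)) := by
  rw [lowerPart, countP_filter]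
  exact countP_congr fun x _ => by simp only [Bool.and_eq_true, decide_eq_true_eq]; omega

theorem countP_add_countP_upperPart (m : ℕ) :
    a.countP (fun x => decide (x ≤ b)) + (upperPart b a).countP (fun x => decide (x ≤ m)) =
      a.countP (fun x => decide (x ≤ m + b)) := by
  rw [countP_eq_countP_filter_add a (fun x => decide (x ≤ m + b)) (fun x => decide (x ≤ b)),
    upperPart, countP_map]
  congr 1
  · rw [countP_eq_length_filter, eq_comm, countP_eq_length]
    intro x hx
    simp only [mem_filter, decide_eq_true_eq] at hx ⊢
    omega
  · exact countP_congr fun x _ => by simp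

theorem shiftW_upperPart : shiftW b (upperPart b a) = a.filter fun x => !decide (x ≤ b) := by
  rw [shiftW, upperPart, map_map]
  refine (map_congr_left fun x hx => ?_).trans (map_id _)
  simp only [mem_filter, Bool.not_eq_eq_eq_not, Bool.not_true, decide_eq_false_iff_not] at hx
  simp only [Function.comp_apply, id_eq]
  omega

theorem mem_sshuffle_lowerPart_upperPart (hb : a.countP (fun x => decide (x ≤ b)) = b) :
    a ∈ sshuffle (lowerPart b a) (upperPart b a) := by
  rw [sshuffle, length_lowerPart, hb, shiftW_upperPart]
  exact mem_shuffles_filter_filter_not _ a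

theorem IsPF.lowerPart (ha : IsPF a) (hb : a.countP (fun x => decide (x ≤ b)) = b) :
    IsPF (lowerPart b a) := by
  rw [isPF_iff_countP] at ha ⊢
  refine ⟨fun x hx => ha.1 x (mem_of_mem_filter hx), fun i hi => ?_⟩
  rw [length_lowerPart, hb] at hi
  have hb_le : b ≤ a.length := hb ▸ countP_le_length
  rw [countP_lowerPart (by omega)]
  exact ha.2 i (by omega)

theorem IsPF.upperPart (ha : IsPF a) (hb : a.countP (fun x => decide (x ≤ b)) = b) :
    IsPF (upperPart b a) := by
  rw [isPF_iff_countP] at ha ⊢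
  refine ⟨fun x hx => ?_, fun i hi => ?_⟩
  · obtain ⟨y, hy, rfl⟩ := mem_map.1 hx
    simp only [mem_filter, Bool.not_eq_eq_eq_not, Bool.not_true, decide_eq_false_iff_not] at hy
    omega
  · rw [length_upperPart, hb] at hi
    have h := ha.2 (i + b) (by omega)
    rw [Nat.add_right_comm, ← countP_add_countP_upperPart, hb] at h
    omega

end Breakpoint

theorem prime_iff_not_in_shifted_shuffle_general (n : ℕ) (a : List ℕ)
    (ha : IsPF a) (hlen : a.length = n) :
    (∀ b, 1 ≤ b → a.countP (fun x => decide (x ≤ b)) = b → b = n) ↔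
      ¬ ∃ u v : List ℕ, IsPF u ∧ IsPF v ∧ 1 ≤ u.length ∧ 1 ≤ v.length ∧
        u.length + v.length = n ∧ a ∈ sshuffle u v := by
  subst hlen
  constructor
  · rintro hprime ⟨u, v, hu, hv, hu_pos, hv_pos, hsum, hmem⟩
    have := hprime u.length hu_pos (countP_le_length_eq_of_mem_sshuffle hu hv.1 hmem)
    omega
  · rintro hno b hb_pos hb
    by_contra hb_ne
    have hb_lt : b < a.length := lt_of_le_of_ne (hb ▸ countP_le_length) hb_ne
    refine hno ⟨lowerPart b a, upperPart b a, ha.lowerPart hb, ha.upperPart hb, ?_, ?_, ?_,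
      mem_sshuffle_lowerPart_upperPart hb⟩ <;>
    simp only [length_lowerPart, length_upperPart, hb] <;> omega

/-- For `n ≥ 1` and `a ∈ PF_n`, `a` is prime (its only breakpoint `b ≥ 1`
is `b = n`) iff `a` does not occur in any shifted shuffle `u ⋒ v` of parking functions
`u ∈ PF_k`, `v ∈ PF_l` with `k, l ≥ 1` and `k + l = n`. -/
theorem prime_iff_not_in_shifted_shuffle (n : ℕ) (hn : 1 ≤ n) (a : List ℕ)
    (ha : IsPF a) (hlen : a.length = n) :
    (∀ b, 1 ≤ b → a.countP (fun x => decide (x ≤ b)) = b → b = n) ↔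
      ¬ ∃ u v : List ℕ, IsPF u ∧ IsPF v ∧ 1 ≤ u.length ∧ 1 ≤ v.length ∧
        u.length + v.length = n ∧ a ∈ sshuffle u v :=
  prime_iff_not_in_shifted_shuffle_general n a ha hlen
end

section
/- For all parking functions a, b, c of length n, the internal product a * b is again a parking function of length n, and the internal product is associative: (a*b)*c = a*(b*c). -/
open List

/-!
Parkization has a closed form. For a positive word `w` let `cnt w s` be the number of letters
`≤ s`, and let `envelope (cnt w)` be the largest function below it that grows by at most one
per step; then `Park(w)` sends a letter `x` to `envelope (cnt w) (x - 1) + 1`. A parkization step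
collapses a value `d = dW w` at which the envelope has already caught up with the count, and
since a count restricted to any set of positions grows no faster than the full count, such a
step preserves the envelope of every restricted count as well.

The count of `a ⊛ y` consists of one block of length `n` per value of `a`. When `y` is a parking
function every block ends within one of its envelope, so the envelope restarts at each block and
`(a * y)ᵢ = #{j | aⱼ < aᵢ} + Park(y restricted to {j | aⱼ = aᵢ})ᵢ`. Applying this twice, and
using that parkization commutes with restriction, both `(a * b) * c` and `a * (b * c)` become
`#{j | (aⱼ, bⱼ) <lex (aᵢ, bᵢ)} + Park(c restricted to {j | (aⱼ, bⱼ) = (aᵢ, bᵢ)})ᵢ`.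
-/

/-- `envelope f x = min_{s ≤ x} (f s + (x - s))`: the largest function below `f` that grows
by at most one at each step. -/
def envelope (f : ℕ → ℕ) : ℕ → ℕ
  | 0 => f 0
  | x + 1 => min (envelope f x + 1) (f (x + 1))

namespace envelope

variable {f g : ℕ → ℕ}

lemma le_self (f : ℕ → ℕ) (x : ℕ) : envelope f x ≤ f x := by
  cases x <;> simp [envelope]

lemma succ_eq (f : ℕ → ℕ) (x : ℕ) :
    envelope f (x + 1) = min (envelope f x + 1) (f (x + 1)) := rfl

lemma le_add (f : ℕ → ℕ) (x k : ℕ) : envelope f (x + k) ≤ envelope f x + k := by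
  induction k with
  | zero => rfl
  | succ k ih =>
    have : envelope f (x + k + 1) ≤ envelope f (x + k) + 1 := min_le_left _ _
    rw [← add_assoc]
    omega

lemma le_of_forall {m x : ℕ} (h : ∀ s ≤ x, m ≤ f s + (x - s)) : m ≤ envelope f x := by
  induction x generalizing m with
  | zero => simpa [envelope] using h 0 le_rfl
  | succ x ih =>
    have hx := ih (m := m - 1) fun s hs => by have := h s (by omega); omega
    have := h (x + 1) le_rfl
    simp only [envelope, le_min_iff]
    omega

lemma congr {x : ℕ} (h : ∀ s ≤ x, f s = g s) : envelope f x = envelope g x := by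
  induction x with
  | zero => exact h 0 le_rfl
  | succ x ih => simp only [envelope, ih fun s hs => h s (by omega), h (x + 1) le_rfl]

lemma monotone (hf : Monotone f) : Monotone (envelope f) :=
  monotone_nat_of_le_succ fun x =>
    le_min (by omega) ((le_self f x).trans (hf x.le_succ))

lemma lt_of_jump (hf : Monotone f) {x y : ℕ} (hjump : f x < f (x + 1)) (hxy : x < y) :
    envelope f x < envelope f y := by
  have : envelope f x < envelope f (x + 1) :=
    lt_min (by omega) ((le_self f x).trans_lt hjump)
  exact this.trans_le (monotone hf hxy)

lemma eq_of_collapse {d : ℕ} (hd : 1 ≤ d) (hlt : ∀ s < d, g s = f s)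
    (hge : ∀ s, d ≤ s → g s = f (s + 1)) (hsat : envelope f (d - 1) = f d) (x : ℕ) :
    envelope g ((if d < x then x - 1 else x) - 1) = envelope f (x - 1) := by
  have below : ∀ s < d, envelope g s = envelope f s := fun s hs =>
    congr fun t ht => hlt t (by omega)
  split_ifs with hx
  · have above : ∀ k, envelope g (d - 1 + k) = envelope f (d + k) := by
      intro k
      induction k with
      | zero =>
        rw [below _ (by omega), Nat.add_zero]
        obtain ⟨e, he⟩ : ∃ e, d = e + 1 := ⟨d - 1, by omega⟩
        subst he
        simp only [envelope, Nat.add_sub_cancel] at hsat ⊢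
        omega
      | succ k ih =>
        rw [show d - 1 + (k + 1) = (d - 1 + k) + 1 by omega,
          show d + (k + 1) = (d + k) + 1 by omega]
        simp only [envelope, ih, hge (d - 1 + k + 1) (by omega)]
        rw [show d - 1 + k + 1 + 1 = d + k + 1 by omega]
    rw [show x - 1 - 1 = d - 1 + (x - 1 - d) by omega, above]
    congr 1
    omega
  · exact below _ (by omega)

/-- Since each block ends at most one above its own envelope (`hφ`), the envelope of `F`
restarts at every block. -/
lemma of_blocks {F L : ℕ → ℕ} {φ : ℕ → ℕ → ℕ} {B : ℕ}
    (hF : ∀ α σ, σ ≤ B → F (α * B + σ) = L α + φ α σ)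
    (hφ : ∀ α, φ α B ≤ envelope (φ α) (B - 1) + 1) (α : ℕ) {σ : ℕ} (hσ : σ < B) :
    envelope F (α * B + σ) = L α + envelope (φ α) σ := by
  have inner : ∀ α, envelope F (α * B) = L α + φ α 0 →
      ∀ σ < B, envelope F (α * B + σ) = L α + envelope (φ α) σ := by
    intro α h0 σ hσ
    induction σ with
    | zero => exact h0
    | succ σ ih =>
      rw [← add_assoc, succ_eq, ih (by omega), add_assoc, add_assoc, hF α (σ + 1) hσ.le,
        succ_eq, min_add_add_left]
  refine inner α ?_ σ hσ
  induction α with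
  | zero => simpa [envelope] using hF 0 0 (Nat.zero_le _)
  | succ α ih =>
    have hstart := hF (α + 1) 0 (Nat.zero_le _)
    have hend := hF α B le_rfl
    rw [Nat.add_zero] at hstart
    rw [show (α + 1) * B = α * B + (B - 1) + 1 by rw [Nat.succ_mul]; omega] at hstart ⊢
    rw [show α * B + B = α * B + (B - 1) + 1 by omega] at hend
    rw [succ_eq, inner α ih (B - 1) (by omega), ← hstart, hend]
    have := hφ α
    omega

end envelope

def cnt (P : ℕ → Prop) [DecidablePred P] (w : List ℕ) (s : ℕ) : ℕ :=
  ((Finset.range w.length).filter fun j => P j ∧ w.getD j 0 ≤ s).card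

section cnt

variable {P Q : ℕ → Prop} [DecidablePred P] [DecidablePred Q] {w w' : List ℕ} {s t : ℕ}

lemma cnt_true (w : List ℕ) (s : ℕ) :
    cnt (fun _ => True) w s = w.countP fun x => decide (x ≤ s) := by
  simp only [cnt, true_and, Finset.card_filter]
  induction w with
  | nil => rfl
  | cons x w ih =>
    rw [List.length_cons, Finset.sum_range_succ', List.countP_cons, ← ih]
    simp only [List.getD_cons_succ, List.getD_cons_zero, decide_eq_true_eq]

lemma cnt_congr (hlen : w'.length = w.length)
    (h : ∀ j < w.length, (Q j ∧ w'.getD j 0 ≤ t ↔ P j ∧ w.getD j 0 ≤ s)) :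
    cnt Q w' t = cnt P w s := by
  unfold cnt
  rw [hlen]
  exact congrArg _ (Finset.filter_congr fun j hj => h j (Finset.mem_range.mp hj))

lemma cnt_mono (P : ℕ → Prop) [DecidablePred P] (w : List ℕ) (h : s ≤ t) :
    cnt P w s ≤ cnt P w t := by
  refine Finset.card_le_card fun j hj => ?_
  simp only [Finset.mem_filter] at hj ⊢
  exact ⟨hj.1, hj.2.1, hj.2.2.trans h⟩

lemma cnt_lt_cnt {j : ℕ} (hj : j < w.length) (hP : P j) (hpos : 1 ≤ w.getD j 0) :
    cnt P w (w.getD j 0 - 1) < cnt P w (w.getD j 0) := by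
  refine Finset.card_lt_card ⟨fun k hk => ?_, fun hsub => ?_⟩
  · simp only [Finset.mem_filter] at hk ⊢
    exact ⟨hk.1, hk.2.1, by omega⟩
  · have := hsub (Finset.mem_filter.mpr ⟨Finset.mem_range.mpr hj, hP, le_rfl⟩)
    simp only [Finset.mem_filter] at this
    omega

lemma cnt_add_cnt_le (P : ℕ → Prop) [DecidablePred P] (w : List ℕ) (h : s ≤ t) :
    cnt P w t + cnt (fun _ => True) w s ≤ cnt (fun _ => True) w t + cnt P w s := by
  simp only [cnt, true_and]
  set R := Finset.range w.length
  have hsub : (R.filter fun j => w.getD j 0 ≤ s) ⊆ R.filter fun j => w.getD j 0 ≤ t := by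
    intro j hj
    simp only [Finset.mem_filter] at hj ⊢
    exact ⟨hj.1, hj.2.trans h⟩
  have hcover : (R.filter fun j => P j ∧ w.getD j 0 ≤ t) ⊆
      (R.filter fun j => P j ∧ w.getD j 0 ≤ s) ∪ ((R.filter fun j => w.getD j 0 ≤ t) \ R.filter fun j => w.getD j 0 ≤ s) := by
    intro j hj
    simp only [Finset.mem_union, Finset.mem_sdiff, Finset.mem_filter] at hj ⊢
    by_cases hjs : w.getD j 0 ≤ s <;> simp_all
  have := (Finset.card_le_card hcover).trans (Finset.card_union_le _ _)
  have := Finset.card_sdiff_add_card_eq_card hsub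
  omega

lemma getD_decAbove (d : ℕ) (w : List ℕ) (j : ℕ) :
    (decAbove d w).getD j 0 = if d < w.getD j 0 then w.getD j 0 - 1 else w.getD j 0 := by
  have := List.getD_map (l := w) (n := j) (d := 0) fun x => if d < x then x - 1 else x
  simp only [Nat.not_lt_zero, if_false] at this
  exact this

lemma cnt_decAbove (P : ℕ → Prop) [DecidablePred P] (d : ℕ) (w : List ℕ) (s : ℕ) :
    cnt P (decAbove d w) s = cnt P w (if s < d then s else s + 1) := by
  refine cnt_congr (by simp [decAbove]) fun j _ => and_congr_right fun _ => ?_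
  rw [getD_decAbove]
  split_ifs <;> omega

end cnt

section dW

variable {w : List ℕ}

lemma dW_mem (w : List ℕ) :
    dW w ∈ {i | 1 ≤ i ∧ w.countP (fun x => decide (x ≤ i)) < i} :=
  Nat.sInf_mem ⟨_, mem_dW_set w⟩

lemma one_le_dW (w : List ℕ) : 1 ≤ dW w := (dW_mem w).1

lemma dW_le (w : List ℕ) : dW w ≤ w.length + 1 := Nat.sInf_le (mem_dW_set w)

lemma le_cnt_of_lt_dW {s : ℕ} (hs : s < dW w) : s ≤ cnt (fun _ => True) w s := by
  rw [cnt_true]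
  by_contra h
  exact Nat.notMem_of_lt_sInf hs ⟨by omega, by omega⟩

lemma cnt_dW (w : List ℕ) : cnt (fun _ => True) w (dW w) = dW w - 1 := by
  have hlt := (dW_mem w).2
  have hle := le_cnt_of_lt_dW (w := w) (s := dW w - 1) (by have := one_le_dW w; omega)
  have := cnt_mono (fun _ => True) w (Nat.sub_le (dW w) 1)
  simp only [cnt_true] at hle this ⊢
  omega

lemma dW_eq_iff : dW w = w.length + 1 ↔ ∀ t ≤ w.length, t ≤ cnt (fun _ => True) w t := by
  refine ⟨fun h t ht => le_cnt_of_lt_dW (by omega), fun h => ?_⟩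
  have := dW_le w
  by_contra hne
  have := h (dW w) (by omega)
  rw [cnt_true] at this
  have := (dW_mem w).2
  omega

end dW

lemma getD_le_iff_lt_cnt {l : List ℕ} (hl : l.Pairwise (· ≤ ·)) {i t : ℕ} (hi : i < l.length) :
    l.getD i 0 ≤ t ↔ i < cnt (fun _ => True) l t := by
  have hmono : ∀ k, k ≤ i → l.getD k 0 ≤ l.getD i 0 := fun k hk => by
    rw [List.getD_eq_getElem _ _ (by omega), List.getD_eq_getElem _ _ hi]
    exact hl.rel_get_of_le (a := ⟨k, by omega⟩) (b := ⟨i, hi⟩) hk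
  unfold cnt
  constructor
  · intro h
    have : Finset.range (i + 1) ⊆ (Finset.range l.length).filter fun j => True ∧ l.getD j 0 ≤ t :=
      fun k hk => by
        simp only [Finset.mem_range, Finset.mem_filter, true_and] at hk ⊢
        exact ⟨by omega, (hmono k (by omega)).trans h⟩
    simpa using Finset.card_le_card this
  · intro h
    by_contra hti
    have : ((Finset.range l.length).filter fun j => True ∧ l.getD j 0 ≤ t) ⊆ Finset.range i :=
      fun k hk => by
        simp only [Finset.mem_range, Finset.mem_filter, true_and] at hk ⊢
        by_contra hki
        have := hl.rel_get_of_le (a := ⟨i, hi⟩) (b := ⟨k, hk.1⟩)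
          (by simp only [Fin.mk_le_mk]; omega)
        simp only [List.get_eq_getElem] at this
        rw [List.getD_eq_getElem _ _ hk.1] at hk
        rw [List.getD_eq_getElem _ _ hi] at hti
        omega
    simpa using (Finset.card_le_card this).trans_lt' h

lemma isPF_iff_le_cnt {w : List ℕ} :
    IsPF w ↔ (∀ x ∈ w, 1 ≤ x) ∧ ∀ t ≤ w.length, t ≤ cnt (fun _ => True) w t := by
  have hperm : sortW w ~ w := List.mergeSort_perm w _
  have hsorted : (sortW w).Pairwise (· ≤ ·) := List.pairwise_mergeSort' (· ≤ ·) w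
  have hcnt : ∀ t, cnt (fun _ => True) (sortW w) t = cnt (fun _ => True) w t := fun t => by
    rw [cnt_true, cnt_true, hperm.countP_eq]
  have hlen : (sortW w).length = w.length := hperm.length_eq
  refine and_congr_right fun _ => ⟨fun h t ht => ?_, fun h i hi => ?_⟩
  · rcases t with _ | t
    · exact Nat.zero_le _
    · rw [← hcnt, Nat.succ_le_iff, ← getD_le_iff_lt_cnt hsorted (by omega)]
      exact h t (by omega)
  · rw [getD_le_iff_lt_cnt hsorted (by omega), hcnt]
    exact h (i + 1) (by omega)

section park

variable {w : List ℕ}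

lemma park_of_dW_eq (h : dW w = w.length + 1) : park w = w := by
  rw [park, dif_pos h]

lemma park_of_dW_ne (h : dW w ≠ w.length + 1) : park w = park (decAbove (dW w) w) := by
  rw [park, dif_neg h]

theorem park_induction {motive : List ℕ → Prop}
    (parked : ∀ w, dW w = w.length + 1 → motive w)
    (step : ∀ w, dW w ≠ w.length + 1 → motive (decAbove (dW w) w) → motive w) (w : List ℕ) :
    motive w := by
  induction h : w.sum using Nat.strong_induction_on generalizing w with
  | _ s ih =>
    by_cases hw : dW w = w.length + 1
    · exact parked w hw
    · exact step w hw (ih _ (h ▸ decAbove_sum_lt hw) _ rfl)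

lemma park_length (w : List ℕ) : (park w).length = w.length := by
  induction w using park_induction with
  | parked w h => rw [park_of_dW_eq h]
  | step w h ih => rw [park_of_dW_ne h, ih, decAbove, List.length_map]

lemma dW_park (w : List ℕ) : dW (park w) = (park w).length + 1 := by
  induction w using park_induction with
  | parked w h => rwa [park_of_dW_eq h]
  | step w h ih => rwa [park_of_dW_ne h]

lemma park_pos (hw : ∀ x ∈ w, 1 ≤ x) : ∀ x ∈ park w, 1 ≤ x := by
  induction w using park_induction with
  | parked w h => rwa [park_of_dW_eq h]
  | step w h ih =>
    rw [park_of_dW_ne h]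
    refine ih fun x hx => ?_
    obtain ⟨y, hy, rfl⟩ := List.mem_map.mp hx
    have := hw y hy
    have := one_le_dW w
    split_ifs <;> omega

lemma isPF_park (hw : ∀ x ∈ w, 1 ≤ x) : IsPF (park w) :=
  isPF_iff_le_cnt.mpr ⟨park_pos hw, dW_eq_iff.mp (dW_park w)⟩

lemma envelope_cnt_pred_dW (P : ℕ → Prop) [DecidablePred P] (w : List ℕ) :
    envelope (cnt P w) (dW w - 1) = cnt P w (dW w) := by
  refine le_antisymm ((envelope.le_self _ _).trans (cnt_mono P w (Nat.sub_le _ _)))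
    (envelope.le_of_forall fun s hs => ?_)
  -- the full count gains at most `dW w - 1 - s` letters between `s` and `dW w`
  have := cnt_add_cnt_le P w (show s ≤ dW w by omega)
  have := cnt_dW w
  have := le_cnt_of_lt_dW (w := w) (s := s) (by have := one_le_dW w; omega)
  omega

lemma envelope_cnt_park (P : ℕ → Prop) [DecidablePred P] (w : List ℕ) {i : ℕ}
    (hi : i < w.length) :
    envelope (cnt P (park w)) ((park w).getD i 0 - 1) = envelope (cnt P w) (w.getD i 0 - 1) := by
  induction w using park_induction generalizing i with
  | parked w h => rw [park_of_dW_eq h]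
  | step w h ih =>
    rw [park_of_dW_ne h, ih (by simpa [decAbove] using hi), getD_decAbove]
    refine envelope.eq_of_collapse (one_le_dW w) (fun s hs => ?_) (fun s hs => ?_)
      (envelope_cnt_pred_dW P w) _
    · rw [cnt_decAbove, if_pos hs]
    · rw [cnt_decAbove, if_neg (by omega)]

end park

section positions

variable {w : List ℕ} {i j : ℕ}

lemma getD_mem (hi : i < w.length) : w.getD i 0 ∈ w :=
  List.getD_eq_getElem w 0 hi ▸ List.getElem_mem hi

lemma one_le_getD (hw : ∀ x ∈ w, 1 ≤ x) (hi : i < w.length) : 1 ≤ w.getD i 0 :=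
  hw _ (getD_mem hi)

lemma cnt_zero (P : ℕ → Prop) [DecidablePred P] (hw : ∀ x ∈ w, 1 ≤ x) : cnt P w 0 = 0 :=
  Finset.card_filter_eq_zero_iff.mpr fun j hj h =>
    by have := one_le_getD hw (Finset.mem_range.mp hj); omega

lemma IsPF.getD_le (hw : IsPF w) (hi : i < w.length) : w.getD i 0 ≤ w.length := by
  have hall : cnt (fun _ => True) w w.length = (Finset.range w.length).card :=
    le_antisymm (Finset.card_filter_le _ _)
      (by simpa using (isPF_iff_le_cnt.mp hw).2 w.length le_rfl)
  exact (Finset.card_filter_eq_iff.mp hall i (Finset.mem_range.mpr hi)).2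

lemma IsPF.le_length (hw : IsPF w) : ∀ x ∈ w, x ≤ w.length := fun x hx => by
  obtain ⟨j, hj, rfl⟩ := List.getElem_of_mem hx
  have := hw.getD_le hj
  rwa [List.getD_eq_getElem _ 0 hj] at this

lemma IsPF.envelope_cnt (hw : IsPF w) (hi : i < w.length) :
    envelope (cnt (fun _ => True) w) (w.getD i 0 - 1) + 1 = w.getD i 0 := by
  have hpos := one_le_getD hw.1 hi
  have hle := hw.getD_le hi
  have hub := envelope.le_add (cnt (fun _ => True) w) 0 (w.getD i 0 - 1)
  rw [zero_add, envelope, cnt_zero _ hw.1, zero_add] at hub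
  have hlb : w.getD i 0 - 1 ≤ envelope (cnt (fun _ => True) w) (w.getD i 0 - 1) :=
    envelope.le_of_forall fun s hs => by
      have := (isPF_iff_le_cnt.mp hw).2 s (by omega)
      omega
  omega

lemma getD_park (hw : ∀ x ∈ w, 1 ≤ x) (hi : i < w.length) :
    (park w).getD i 0 = envelope (cnt (fun _ => True) w) (w.getD i 0 - 1) + 1 := by
  rw [← envelope_cnt_park _ w hi,
    (isPF_park hw).envelope_cnt (by rwa [park_length])]

lemma getD_park_lt_getD_park_iff (hw : ∀ x ∈ w, 1 ≤ x) (hi : i < w.length) (hj : j < w.length) :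
    (park w).getD j 0 < (park w).getD i 0 ↔ w.getD j 0 < w.getD i 0 := by
  have hmono : Monotone (cnt (fun _ => True) w) := fun s t h => cnt_mono _ w h
  have hposj := one_le_getD hw hj
  rw [getD_park hw hi, getD_park hw hj, Nat.add_lt_add_iff_right]
  constructor
  · intro h
    by_contra hji
    exact (envelope.monotone hmono (Nat.sub_le_sub_right (not_lt.mp hji) 1)).not_gt h
  · intro h
    refine envelope.lt_of_jump hmono ?_ (by omega)
    rw [Nat.sub_add_cancel hposj]
    exact cnt_lt_cnt hj trivial hposj

lemma getD_park_eq_getD_park_iff (hw : ∀ x ∈ w, 1 ≤ x) (hi : i < w.length) (hj : j < w.length) :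
    (park w).getD j 0 = (park w).getD i 0 ↔ w.getD j 0 = w.getD i 0 := by
  have := getD_park_lt_getD_park_iff hw hi hj
  have := getD_park_lt_getD_park_iff hw hj hi
  omega

end positions

lemma mul_add_le_mul_add_iff {B m z α σ : ℕ} (hz : 1 ≤ z) (hzB : z ≤ B) (hσ : σ ≤ B) :
    m * B + z ≤ α * B + σ ↔ m < α ∨ m = α ∧ z ≤ σ := by
  rcases lt_trichotomy m α with h | rfl | h
  · have := Nat.mul_le_mul_right B (Nat.succ_le_of_lt h)
    rw [Nat.succ_mul] at this
    exact ⟨fun _ => Or.inl h, fun _ => by omega⟩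
  · simp
  · have := Nat.mul_le_mul_right B (Nat.succ_le_of_lt h)
    rw [Nat.succ_mul] at this
    constructor
    · intro; omega
    · rintro (h' | ⟨rfl, -⟩) <;> omega

lemma mul_add_eq_mul_add_iff {B m z m' z' : ℕ} (hz : 1 ≤ z) (hzB : z ≤ B) (hz' : 1 ≤ z')
    (hz'B : z' ≤ B) :
    m * B + z = m' * B + z' ↔ m = m' ∧ z = z' := by
  have := mul_add_le_mul_add_iff (m := m) (α := m') hz hzB hz'B
  have := mul_add_le_mul_add_iff (m := m') (α := m) hz' hz'B hzB
  omega

section pairEnc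

variable {B : ℕ} {a y : List ℕ}

lemma pairEnc_length (hlen : y.length = a.length) : (pairEnc B a y).length = a.length := by
  simp [pairEnc, hlen]

lemma getD_pairEnc (hlen : y.length = a.length) (j : ℕ) :
    (pairEnc B a y).getD j 0 = (a.getD j 0 - 1) * B + y.getD j 0 := by
  by_cases hj : j < a.length
  · rw [List.getD_eq_getElem _ _ (by rwa [pairEnc_length hlen]), List.getD_eq_getElem _ _ hj,
      List.getD_eq_getElem _ _ (by omega)]
    simp [pairEnc]
  · rw [List.getD_eq_default _ _ (by rw [pairEnc_length hlen]; omega),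
      List.getD_eq_default _ _ (by omega), List.getD_eq_default _ _ (by omega)]
    simp

lemma pairEnc_pos (hlen : y.length = a.length) (hy : ∀ x ∈ y, 1 ≤ x) :
    ∀ x ∈ pairEnc B a y, 1 ≤ x := by
  intro x hx
  obtain ⟨j, hj, rfl⟩ := List.getElem_of_mem hx
  rw [← List.getD_eq_getElem _ 0, getD_pairEnc hlen]
  have := one_le_getD hy (show j < y.length by rw [pairEnc_length hlen] at hj; omega)
  omega

variable (P : ℕ → Prop) [DecidablePred P]

lemma cnt_pairEnc (hlen : y.length = a.length) (ha : ∀ x ∈ a, 1 ≤ x) (hy : ∀ x ∈ y, 1 ≤ x)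
    (hyB : ∀ x ∈ y, x ≤ B) (α : ℕ) {σ : ℕ} (hσ : σ ≤ B) :
    cnt P (pairEnc B a y) (α * B + σ) =
      cnt P a α + cnt (fun j => P j ∧ a.getD j 0 = α + 1) y σ := by
  unfold cnt
  rw [pairEnc_length hlen, hlen, ← Finset.card_union_of_disjoint, ← Finset.filter_or]
  · refine congrArg _ (Finset.filter_congr fun j hj => ?_)
    have hj := Finset.mem_range.mp hj
    have haj := one_le_getD ha hj
    have hyj := one_le_getD hy (show j < y.length by omega)
    have hyjB := hyB _ (getD_mem (show j < y.length by omega))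
    rw [getD_pairEnc hlen, mul_add_le_mul_add_iff hyj hyjB hσ]
    have : a.getD j 0 - 1 < α ∨ a.getD j 0 - 1 = α ∧ y.getD j 0 ≤ σ ↔
        a.getD j 0 ≤ α ∨ a.getD j 0 = α + 1 ∧ y.getD j 0 ≤ σ := by omega
    rw [this]
    tauto
  · refine Finset.disjoint_filter.mpr fun j _ h1 h2 => ?_
    omega

lemma envelope_cnt_pairEnc (hlen : y.length = a.length) (ha : ∀ x ∈ a, 1 ≤ x)
    (hy : ∀ x ∈ y, 1 ≤ x) (hyB : ∀ x ∈ y, x ≤ B)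
    (hsparse : ∀ γ, cnt (fun j => P j ∧ a.getD j 0 = γ) y B ≤
      envelope (cnt (fun j => P j ∧ a.getD j 0 = γ) y) (B - 1) + 1)
    {i : ℕ} (hi : i < a.length) :
    envelope (cnt P (pairEnc B a y)) ((pairEnc B a y).getD i 0 - 1) =
      cnt P a (a.getD i 0 - 1) +
        envelope (cnt (fun j => P j ∧ a.getD j 0 = a.getD i 0) y) (y.getD i 0 - 1) := by
  have hai := one_le_getD ha hi
  have hyi := one_le_getD hy (show i < y.length by omega)
  have hyiB := hyB _ (getD_mem (show i < y.length by omega))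
  have := envelope.of_blocks (F := cnt P (pairEnc B a y)) (L := cnt P a)
    (φ := fun α => cnt (fun j => P j ∧ a.getD j 0 = α + 1) y)
    (fun α σ hσ => cnt_pairEnc P hlen ha hy hyB α hσ) (fun α => hsparse (α + 1))
    (a.getD i 0 - 1) (σ := y.getD i 0 - 1) (by omega)
  rw [getD_pairEnc hlen, show (a.getD i 0 - 1) * B + y.getD i 0 - 1 =
    (a.getD i 0 - 1) * B + (y.getD i 0 - 1) by omega, this, Nat.sub_add_cancel hai]

end pairEnc

lemma IsPF.cnt_le_envelope {y : List ℕ} (hy : IsPF y) (Q : ℕ → Prop) [DecidablePred Q] :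
    cnt Q y y.length ≤ envelope (cnt Q y) (y.length - 1) + 1 := by
  suffices cnt Q y y.length - 1 ≤ envelope (cnt Q y) (y.length - 1) by omega
  refine envelope.le_of_forall fun s hs => ?_
  have := cnt_add_cnt_le Q y (show s ≤ y.length by omega)
  have := (isPF_iff_le_cnt.mp hy).2 s (by omega)
  have : cnt (fun _ => True) y y.length ≤ y.length :=
    (Finset.card_filter_le _ _).trans (Finset.card_range _).le
  omega

lemma cnt_park_getD_pred (P : ℕ → Prop) [DecidablePred P] {w : List ℕ} (hw : ∀ x ∈ w, 1 ≤ x)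
    {i : ℕ} (hi : i < w.length) :
    cnt P (park w) ((park w).getD i 0 - 1) = cnt P w (w.getD i 0 - 1) := by
  refine cnt_congr (park_length w) fun j hj => and_congr_right fun _ => ?_
  have := getD_park_lt_getD_park_iff hw hi hj
  have := one_le_getD hw hi
  have := one_le_getD (park_pos hw) (show i < (park w).length by rwa [park_length])
  omega

section iprod

variable {a y : List ℕ}

lemma iprod_length (hlen : y.length = a.length) : (iprod a y).length = a.length := by
  rw [iprod, park_length, pairEnc_length hlen]

lemma isPF_iprod (hlen : y.length = a.length) (hy : ∀ x ∈ y, 1 ≤ x) : IsPF (iprod a y) :=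
  isPF_park (pairEnc_pos hlen hy)

lemma getD_iprod (ha : ∀ x ∈ a, 1 ≤ x) (hy : IsPF y) (hlen : y.length = a.length) {i : ℕ}
    (hi : i < a.length) :
    (iprod a y).getD i 0 = cnt (fun _ => True) a (a.getD i 0 - 1) +
      envelope (cnt (fun j => True ∧ a.getD j 0 = a.getD i 0) y) (y.getD i 0 - 1) + 1 := by
  rw [iprod, getD_park (pairEnc_pos hlen hy.1) (by rwa [pairEnc_length hlen]),
    envelope_cnt_pairEnc _ hlen ha hy.1 (fun x hx => hlen ▸ hy.le_length x hx)
      (fun γ => hlen ▸ hy.cnt_le_envelope _) hi]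

lemma getD_iprod_eq_getD_iprod_iff (ha : ∀ x ∈ a, 1 ≤ x) (hy : IsPF y)
    (hlen : y.length = a.length) {i j : ℕ} (hi : i < a.length) (hj : j < a.length) :
    (iprod a y).getD j 0 = (iprod a y).getD i 0 ↔
      a.getD j 0 = a.getD i 0 ∧ y.getD j 0 = y.getD i 0 := by
  have := one_le_getD ha hi
  have := one_le_getD ha hj
  rw [iprod, getD_park_eq_getD_park_iff (pairEnc_pos hlen hy.1) (by rwa [pairEnc_length hlen])
    (by rwa [pairEnc_length hlen]), getD_pairEnc hlen, getD_pairEnc hlen,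
    mul_add_eq_mul_add_iff (one_le_getD hy.1 (by omega)) (hlen ▸ hy.getD_le (by omega))
      (one_le_getD hy.1 (by omega)) (hlen ▸ hy.getD_le (by omega))]
  omega

lemma cnt_iprod_getD_pred (P : ℕ → Prop) [DecidablePred P] (ha : ∀ x ∈ a, 1 ≤ x) (hy : IsPF y)
    (hlen : y.length = a.length) {i : ℕ} (hi : i < a.length) :
    cnt P (iprod a y) ((iprod a y).getD i 0 - 1) =
      cnt P a (a.getD i 0 - 1) +
        cnt (fun j => P j ∧ a.getD j 0 = a.getD i 0) y (y.getD i 0 - 1) := by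
  have hai := one_le_getD ha hi
  have hyi := one_le_getD hy.1 (show i < y.length by omega)
  rw [iprod, cnt_park_getD_pred P (pairEnc_pos hlen hy.1) (by rwa [pairEnc_length hlen]),
    getD_pairEnc hlen, show (a.getD i 0 - 1) * a.length + y.getD i 0 - 1 =
      (a.getD i 0 - 1) * a.length + (y.getD i 0 - 1) by omega,
    cnt_pairEnc P hlen ha hy.1 (fun x hx => hlen ▸ hy.le_length x hx) _ (by
      have := hy.getD_le (show i < y.length by omega); omega),
    Nat.sub_add_cancel hai]

end iprod

/-- For all `a, b, c ∈ PF_n`, the internal product `a * b = Park(a ⊛ b)`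
is again in `PF_n`, and the internal product is associative. -/
theorem iprod_isPF_and_assoc (n : ℕ) (a b c : List ℕ)
    (ha : IsPF a) (hb : IsPF b) (hc : IsPF c)
    (hla : a.length = n) (hlb : b.length = n) (hlc : c.length = n) :
    (IsPF (iprod a b) ∧ (iprod a b).length = n) ∧
      iprod (iprod a b) c = iprod a (iprod b c) := by
  subst hla
  have hp : IsPF (iprod a b) := isPF_iprod hlb hb.1
  have hlp : (iprod a b).length = a.length := iprod_length hlb
  have hlq : (iprod b c).length = a.length := (iprod_length (by omega)).trans hlb
  refine ⟨⟨hp, hlp⟩, List.ext_getElem ?_ fun i hi _ => ?_⟩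
  · rw [iprod_length (by omega), iprod_length hlq, hlp]
  rw [iprod_length (by omega), hlp] at hi
  have hclass : cnt (fun j => True ∧ (iprod a b).getD j 0 = (iprod a b).getD i 0) c =
      cnt (fun j => (True ∧ a.getD j 0 = a.getD i 0) ∧ b.getD j 0 = b.getD i 0) c :=
    funext fun s => cnt_congr rfl fun j hj => by
      rw [getD_iprod_eq_getD_iprod_iff ha.1 hb hlb hi (by omega), true_and, true_and]
  have lhs : (iprod (iprod a b) c).getD i 0 = cnt (fun _ => True) a (a.getD i 0 - 1) +
      cnt (fun j => True ∧ a.getD j 0 = a.getD i 0) b (b.getD i 0 - 1) +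
      envelope (cnt (fun j => (True ∧ a.getD j 0 = a.getD i 0) ∧ b.getD j 0 = b.getD i 0) c)
        (c.getD i 0 - 1) + 1 := by
    rw [getD_iprod hp.1 hc (by omega) (by omega), cnt_iprod_getD_pred _ ha.1 hb hlb hi, hclass]
  have rhs : (iprod a (iprod b c)).getD i 0 = cnt (fun _ => True) a (a.getD i 0 - 1) +
      cnt (fun j => True ∧ a.getD j 0 = a.getD i 0) b (b.getD i 0 - 1) +
      envelope (cnt (fun j => (True ∧ a.getD j 0 = a.getD i 0) ∧ b.getD j 0 = b.getD i 0) c)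
        (c.getD i 0 - 1) + 1 := by
    rw [getD_iprod ha.1 (isPF_iprod (by omega) hc.1) hlq hi,
      show iprod b c = park (pairEnc b.length b c) from rfl,
      envelope_cnt_park _ _ (by rw [pairEnc_length (by omega)]; omega),
      envelope_cnt_pairEnc _ (by omega) hb.1 hc.1 (fun x hx => (hc.le_length x hx).trans (by omega))
        (fun γ => by rw [hlb, ← hlc]; exact hc.cnt_le_envelope _) (by omega)]
    ring
  rw [← List.getD_eq_getElem _ 0, ← List.getD_eq_getElem _ 0, lhs, rhs]
end

section
/- Let 1^n denote the parking function of length n with all letters equal to 1. Then 1^n * b = b for every parking function b of length n, so 1^n is a left unit for the internal product; but for every n ≥ 3, (2,1,1,…,1) * 1^n = (n,1,1,…,1) ≠ (2,1,1,…,1), so 1^n is not a right unit. -/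
open List

/-! A word `w` with `i ≤ #{j : wⱼ ≤ i}` for every `i ≤ |w|` is fixed by parkization, and every
parking function is such a word. Since `1ⁿ ⊛ b = b`, this makes `1ⁿ` a left unit. On the other
side, `(2,1,…,1) ⊛ 1ⁿ = (n+1,1,…,1)`, and parkization lowers a first letter `x > m + 1` of
`x · 1ᵐ` one step at a time (`d = m + 1` at each step) until it reaches `m + 1 = n`. -/

lemma dW_eq_of_forall_lt {w : List ℕ} {d : ℕ} (hd : 1 ≤ d) (hlt : w.countP (· ≤ d) < d)
    (hmin : ∀ i, 1 ≤ i → i < d → i ≤ w.countP (· ≤ i)) : dW w = d := by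
  refine le_antisymm (Nat.sInf_le ⟨hd, hlt⟩) (le_csInf ⟨d, hd, hlt⟩ ?_)
  rintro i ⟨hi, hcount⟩
  by_contra! hid
  exact (hmin i hi hid).not_gt hcount

lemma dW_eq_length_add_one {w : List ℕ} (h : ∀ i, 1 ≤ i → i ≤ w.length → i ≤ w.countP (· ≤ i)) :
    dW w = w.length + 1 :=
  dW_eq_of_forall_lt (by omega) (Nat.lt_succ_of_le List.countP_le_length)
    fun i hi hlt => h i hi (by omega)

lemma park_eq_self {w : List ℕ} (h : ∀ i, 1 ≤ i → i ≤ w.length → i ≤ w.countP (· ≤ i)) :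
    park w = w := by
  rw [park, dif_pos (dW_eq_length_add_one h)]

lemma park_eq_park_decAbove {w : List ℕ} (h : dW w ≠ w.length + 1) :
    park w = park (decAbove (dW w) w) := by
  rw [park, dif_neg h]

lemma IsPF.le_countP {b : List ℕ} (hb : IsPF b) (i : ℕ) (hi : i ≤ b.length) :
    i ≤ b.countP (· ≤ i) := by
  have hperm : (sortW b).Perm b := List.mergeSort_perm b _
  have hlen : (sortW b).length = b.length := hperm.length_eq
  have hprefix : ∀ x ∈ (sortW b).take i, decide (x ≤ i) = true := by
    intro x hx
    obtain ⟨j, hj, rfl⟩ := List.getElem_of_mem hx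
    rw [List.length_take] at hj
    have := hb.2 j (by omega)
    rw [List.getD_eq_getElem _ _ (by omega)] at this
    simp only [List.getElem_take, decide_eq_true_eq]
    omega
  calc i = ((sortW b).take i).countP (· ≤ i) := by
        rw [List.countP_eq_length.mpr hprefix, List.length_take]; omega
    _ ≤ (sortW b).countP (· ≤ i) := (List.take_sublist i _).countP_le
    _ = b.countP (· ≤ i) := hperm.countP_eq _

lemma park_of_isPF {b : List ℕ} (hb : IsPF b) : park b = b :=
  park_eq_self fun i _ hi => hb.le_countP i hi

lemma pairEnc_replicate_one_left (m : ℕ) (l : List ℕ) :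
    pairEnc m (List.replicate l.length 1) l = l := by
  induction l with
  | nil => rfl
  | cons y l ih =>
    simp only [pairEnc] at ih ⊢
    rw [List.length_cons, List.replicate_succ, List.zipWith_cons_cons, ih]
    simp

lemma pairEnc_cons_replicate_one (k x m : ℕ) :
    pairEnc k (x :: List.replicate m 1) (List.replicate (m + 1) 1)
      = ((x - 1) * k + 1) :: List.replicate m 1 := by
  have h := pairEnc_replicate_one_left k (List.replicate m 1)
  rw [List.length_replicate] at h
  simp only [pairEnc] at h ⊢
  rw [List.replicate_succ, List.zipWith_cons_cons, h]

lemma countP_cons_replicate_one {x m i : ℕ} (hi : 1 ≤ i) :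
    (x :: List.replicate m 1).countP (· ≤ i) = m + if x ≤ i then 1 else 0 := by
  simp [List.countP_cons, List.countP_replicate, hi]

lemma park_cons_replicate_one_of_le {x m : ℕ} (hx : x ≤ m + 1) :
    park (x :: List.replicate m 1) = x :: List.replicate m 1 := by
  refine park_eq_self fun i hi hil => ?_
  rw [countP_cons_replicate_one hi]
  simp only [List.length_cons, List.length_replicate] at hil
  split <;> omega

lemma park_cons_replicate_one {x : ℕ} (m : ℕ) (hx : 1 ≤ x) :
    park (x :: List.replicate m 1) = min x (m + 1) :: List.replicate m 1 := by
  induction x, hx using Nat.le_induction with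
  | base => rw [park_cons_replicate_one_of_le (by omega), min_eq_left (by omega)]
  | succ x hx ih =>
    by_cases hxm : x + 1 ≤ m + 1
    · rw [park_cons_replicate_one_of_le hxm, min_eq_left hxm]
    have hd : dW ((x + 1) :: List.replicate m 1) = m + 1 :=
      dW_eq_of_forall_lt (by omega)
        (by rw [countP_cons_replicate_one (by omega), if_neg hxm]; omega)
        fun i hi hlt => by rw [countP_cons_replicate_one hi]; omega
    have hdec : decAbove (m + 1) ((x + 1) :: List.replicate m 1) = x :: List.replicate m 1 := by
      simp [decAbove, show m < x by omega]
    rw [park_eq_park_decAbove (by simp [hd]), hd, hdec, ih, min_eq_right (by omega),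
      min_eq_right (by omega)]

/-- `1ⁿ * b = b` for every `b ∈ PF_n`, so `1ⁿ` is a left unit for the
internal product; but for `n ≥ 3`, `(2,1,…,1) * 1ⁿ = (n,1,…,1) ≠ (2,1,…,1)`,
so `1ⁿ` is not a right unit. -/
theorem ones_left_unit_not_right_unit (n : ℕ) :
    (∀ b : List ℕ, IsPF b → b.length = n → iprod (onesW n) b = b) ∧
    (3 ≤ n →
      iprod (2 :: onesW (n - 1)) (onesW n) = n :: onesW (n - 1) ∧
        n :: onesW (n - 1) ≠ 2 :: onesW (n - 1)) := by
  refine ⟨fun b hb hlen => ?_, fun hn => ⟨?_, ?_⟩⟩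
  · subst hlen
    rw [iprod, onesW, List.length_replicate, pairEnc_replicate_one_left, park_of_isPF hb]
  · obtain ⟨m, rfl⟩ : ∃ m, n = m + 1 := ⟨n - 1, by omega⟩
    rw [iprod, onesW, onesW, List.length_cons, List.length_replicate, Nat.add_sub_cancel,
      pairEnc_cons_replicate_one, park_cons_replicate_one m (by omega)]
    congr 1
    omega
  · simp only [ne_eq, List.cons.injEq, not_and]
    omega
end
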